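/- arXiv:1204.2763 — 6 statements merged into one kernel-verified Lean document; each statement's English description precedes it below -/
import Mathlib

section
/- For probability measures μ and ν on a measurable space with ν absolutely continuous with respect to μ and dν/dμ square μ-integrable, the quadratic divergence of the n-fold product measures satisfies d(μ^⊗n, ν^⊗n) = (d(μ,ν) + 1)^n - 1, where d(μ,ν) = ∫ (1 - dν/dμ)² dμ. -/
open MeasureTheory
open scoped ENNReal

/-! The density of `ν^⊗n` with respect to `μ^⊗n` is `x ↦ ∏ i, f (x i)` with `f = dν/dμ`, so by
Fubini its second moment is `(∫ f² dμ)^n`. For a density `g` with `∫ g = 1` the divergence is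
`∫ (1 - g)² = ∫ g² - 1`, which turns this into `d(μ^⊗n, ν^⊗n) + 1 = (d(μ, ν) + 1)^n`. -/

namespace MeasureTheory

theorem lintegral_fin_nat_prod_eq_prod {n : ℕ} {E : Type*}
    [MeasurableSpace E] {μ : Fin n → Measure E} [∀ i, SigmaFinite (μ i)]
    {f : Fin n → E → ℝ≥0∞} (hf : ∀ i, Measurable (f i)) :
    ∫⁻ x, ∏ i, f i (x i) ∂(Measure.pi μ) = ∏ i, ∫⁻ x, f i x ∂μ i := by
  induction n with
  | zero => simp
  | succ n ih =>
    calc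
      _ = ∫⁻ x : E × (Fin n → E), f 0 x.1 * ∏ i : Fin n, f i.succ (x.2 i)
            ∂((μ 0).prod (Measure.pi fun i ↦ μ i.succ)) := by
        rw [← ((measurePreserving_piFinSuccAbove μ 0).symm).lintegral_comp_emb
          (MeasurableEquiv.measurableEmbedding _)]
        simp_rw [MeasurableEquiv.piFinSuccAbove_symm_apply, Fin.insertNthEquiv,
          Fin.prod_univ_succ, Fin.insertNth_zero, Equiv.coe_fn_mk, Fin.cons_succ,
          Fin.zero_succAbove, cast_eq, Fin.cons_zero]
      _ = (∫⁻ x, f 0 x ∂μ 0) * ∏ i : Fin n, ∫⁻ x, f i.succ x ∂μ i.succ := by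
        have htail : Measurable fun y : Fin n → E ↦ ∏ i, f i.succ (y i) :=
          Finset.measurable_prod _ fun i _ ↦ (hf i.succ).comp (measurable_pi_apply i)
        rw [lintegral_prod_mul (hf 0).aemeasurable htail.aemeasurable, ih fun i ↦ hf i.succ]
      _ = ∏ i, ∫⁻ x, f i x ∂μ i := by rw [Fin.prod_univ_succ]

variable {ι E : Type*} [Fintype ι] [MeasurableSpace E] {μ : ι → Measure E} [∀ i, SigmaFinite (μ i)]

theorem lintegral_fintype_prod_eq_prod {f : ι → E → ℝ≥0∞} (hf : ∀ i, Measurable (f i)) :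
    ∫⁻ x, ∏ i, f i (x i) ∂(Measure.pi μ) = ∏ i, ∫⁻ x, f i x ∂μ i := by
  let e := (Fintype.equivFin ι).symm
  rw [← (measurePreserving_piCongrLeft _ e).lintegral_comp_emb
    (MeasurableEquiv.measurableEmbedding _)]
  simp_rw [← e.prod_comp, MeasurableEquiv.coe_piCongrLeft,
    Equiv.piCongrLeft_apply_apply]
  exact lintegral_fin_nat_prod_eq_prod fun i ↦ hf (e i)

theorem Measure.pi_withDensity {f : ι → E → ℝ≥0∞} (hf : ∀ i, Measurable (f i))
    [∀ i, SigmaFinite ((μ i).withDensity (f i))] :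
    Measure.pi (fun i ↦ (μ i).withDensity (f i))
      = (Measure.pi μ).withDensity fun x ↦ ∏ i, f i (x i) := by
  refine Measure.pi_eq fun s hs ↦ ?_
  have hindicator : (Set.univ.pi s).indicator (fun x ↦ ∏ i, f i (x i))
      = fun x ↦ ∏ i, (s i).indicator (f i) (x i) := by
    ext x
    classical
    simp only [Set.indicator_apply, Set.mem_univ_pi]
    exact (Fintype.prod_ite_zero ..).symm
  rw [withDensity_apply _ (.univ_pi hs), ← lintegral_indicator (.univ_pi hs), hindicator,
    lintegral_fintype_prod_eq_prod fun i ↦ (hf i).indicator (hs i)]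
  simp_rw [lintegral_indicator (hs _), withDensity_apply _ (hs _)]

theorem Measure.rnDeriv_pi {ν : ι → Measure E} [∀ i, SigmaFinite (ν i)] (h : ∀ i, ν i ≪ μ i) :
    (Measure.pi ν).rnDeriv (Measure.pi μ)
      =ᵐ[Measure.pi μ] fun x ↦ ∏ i, (ν i).rnDeriv (μ i) (x i) := by
  have hpi : Measure.pi ν = (Measure.pi μ).withDensity fun x ↦ ∏ i, (ν i).rnDeriv (μ i) (x i) := by
    have (i : ι) : SigmaFinite ((μ i).withDensity ((ν i).rnDeriv (μ i))) := by
      rw [Measure.withDensity_rnDeriv_eq _ _ (h i)]; infer_instance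
    rw [← Measure.pi_withDensity fun i ↦ Measure.measurable_rnDeriv _ _]
    simp_rw [Measure.withDensity_rnDeriv_eq _ _ (h _)]
  rw [hpi]
  exact Measure.rnDeriv_withDensity _ (Finset.measurable_prod _ fun i _ ↦
    (Measure.measurable_rnDeriv _ _).comp (measurable_pi_apply i))

theorem memLp_two_fintype_prod [∀ i, IsFiniteMeasure (μ i)] {f : ι → E → ℝ}
    (hf : ∀ i, MemLp (f i) 2 (μ i)) :
    MemLp (fun x : ι → E ↦ ∏ i, f i (x i)) 2 (Measure.pi μ) := by
  refine (memLp_two_iff_integrable_sq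
    (Integrable.fintype_prod fun i ↦ (hf i).integrable one_le_two).aestronglyMeasurable).2 ?_
  simp_rw [← Finset.prod_pow]
  exact Integrable.fintype_prod fun i ↦ (hf i).integrable_sq

theorem integral_one_sub_sq_of_integral_eq_one {Y : Type*} [MeasurableSpace Y] {m : Measure Y}
    [IsProbabilityMeasure m] {P : Y → ℝ} (hP : MemLp P 2 m) (h1 : ∫ y, P y ∂m = 1) :
    ∫ y, (1 - P y) ^ 2 ∂m = ∫ y, P y ^ 2 ∂m - 1 := by
  have hP1 : Integrable (fun y ↦ 2 * P y) m := (hP.integrable one_le_two).const_mul 2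
  calc ∫ y, (1 - P y) ^ 2 ∂m = ∫ y, 1 - 2 * P y + P y ^ 2 ∂m := by congr with y; ring
    _ = ∫ y, P y ^ 2 ∂m - 1 := by
      rw [integral_add (f := fun y ↦ 1 - 2 * P y) ((integrable_const 1).sub hP1)
          hP.integrable_sq,
        integral_sub (integrable_const 1) hP1, integral_const_mul, h1]
      simp only [integral_const, probReal_univ, smul_eq_mul]
      ring

end MeasureTheory

/-- The quadratic divergence of the `n`-fold product measures:
`d(μ^⊗n, ν^⊗n) = (d(μ,ν) + 1)^n - 1`, where `d(μ,ν) = ∫ (1 - dν/dμ)² dμ`. -/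
theorem qdiv_pi_eq {X : Type*} [MeasurableSpace X] (μ ν : Measure X)
    [IsProbabilityMeasure μ] [IsProbabilityMeasure ν] (n : ℕ)
    (hac : ν ≪ μ) (hL2 : MemLp (fun x => (ν.rnDeriv μ x).toReal) 2 μ) :
    ∫ x, (1 - ((Measure.pi fun _ : Fin n => ν).rnDeriv (Measure.pi fun _ : Fin n => μ) x).toReal) ^ 2
        ∂(Measure.pi fun _ : Fin n => μ)
      = ((∫ x, (1 - (ν.rnDeriv μ x).toReal) ^ 2 ∂μ) + 1) ^ n - 1 := by
  set t : X → ℝ := fun x ↦ (ν.rnDeriv μ x).toReal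
  have ht : ∫ x, t x ∂μ = 1 := by simp [t, Measure.integral_toReal_rnDeriv hac]
  have hprod : ∫ x, ∏ i, t (x i) ∂(Measure.pi fun _ : Fin n => μ) = 1 := by
    rw [integral_fintype_prod_eq_pow, ht, one_pow]
  calc _ = ∫ x, (1 - ∏ i, t (x i)) ^ 2 ∂(Measure.pi fun _ : Fin n => μ) := by
        refine integral_congr_ae ?_
        filter_upwards [Measure.rnDeriv_pi fun _ ↦ hac] with x hx
        rw [hx, ENNReal.toReal_prod]
    _ = ∫ x, (∏ i, t (x i)) ^ 2 ∂(Measure.pi fun _ : Fin n => μ) - 1 :=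
        integral_one_sub_sq_of_integral_eq_one (memLp_two_fintype_prod fun _ ↦ hL2) hprod
    _ = (∫ x, t x ^ 2 ∂μ) ^ n - 1 := by
        simp_rw [← Finset.prod_pow]
        rw [integral_fintype_prod_eq_pow fun y ↦ t y ^ 2, Fintype.card_fin]
    _ = _ := by rw [integral_one_sub_sq_of_integral_eq_one hL2 ht, sub_add_cancel]
end

section
/- For fixed n ≥ 1, the function θ ↦ n(1 - e^θ)² / (e^{nθ²} - 1), defined for θ ≠ 0 (extended by its limit 1 at θ = 0), attains its supremum over R at θ = 1/n, with supremum value n(e^{1/n} - 1). In particular this supremum is strictly greater than 1 for all n. -/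
/-!
Since `e^t - 1 = ∑ t^(k+1)/(k+1)!` has nonnegative coefficients, Cauchy–Schwarz applied to the
series gives `(e^(uv) - 1)² ≤ (e^(u²) - 1)(e^(v²) - 1)` for `u, v ≥ 0`. Taking `u² = 1/n` and
`v² = nθ²`, and using `|1 - e^θ| ≤ e^|θ| - 1`, this is exactly
`n(1 - e^θ)²/(e^(nθ²) - 1) ≤ n(e^(1/n) - 1)`, and a direct computation shows that `θ = 1/n`
attains the bound.
-/

theorem sq_le_mul_of_hasSum_mul {ι : Type*} {f g : ι → ℝ} (hf : ∀ i, 0 ≤ f i) (hg : ∀ i, 0 ≤ g i)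
    {A B C : ℝ} (hA : HasSum (fun i => f i ^ 2) A) (hB : HasSum (fun i => g i ^ 2) B)
    (hC : HasSum (fun i => f i * g i) C) : C ^ 2 ≤ A * B := by
  have hA0 : 0 ≤ A := hA.nonneg fun i => sq_nonneg (f i)
  have hB0 : 0 ≤ B := hB.nonneg fun i => sq_nonneg (g i)
  obtain ⟨C', hC'0, hC'le, hC'⟩ := Real.inner_le_Lp_mul_Lq_hasSum_of_nonneg
    Real.HolderConjugate.two_two (Real.sqrt_nonneg A) (Real.sqrt_nonneg B) hf hg
    (by simpa only [Real.rpow_two, Real.sq_sqrt hA0] using hA)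
    (by simpa only [Real.rpow_two, Real.sq_sqrt hB0] using hB)
  obtain rfl : C = C' := hC.unique hC'
  calc C ^ 2 ≤ (√A * √B) ^ 2 := pow_le_pow_left₀ hC'0 hC'le 2
    _ = A * B := by rw [mul_pow, Real.sq_sqrt hA0, Real.sq_sqrt hB0]

theorem Real.hasSum_pow_succ_div_factorial (x : ℝ) :
    HasSum (fun k : ℕ => x ^ (k + 1) / (k + 1).factorial) (Real.exp x - 1) := by
  have h := NormedSpace.expSeries_div_hasSum_exp x
  rw [← Real.exp_eq_exp_ℝ] at h
  simpa using (hasSum_nat_add_iff' 1).2 h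

theorem Real.sq_exp_mul_sub_one_le {u v : ℝ} (hu : 0 ≤ u) (hv : 0 ≤ v) :
    (Real.exp (u * v) - 1) ^ 2 ≤ (Real.exp (u ^ 2) - 1) * (Real.exp (v ^ 2) - 1) := by
  have term (w : ℝ) (k : ℕ) :
      (w ^ (k + 1) / √(k + 1).factorial) ^ 2 = (w ^ 2) ^ (k + 1) / (k + 1).factorial := by
    rw [div_pow, Real.sq_sqrt (by positivity), ← pow_mul, ← pow_mul, mul_comm]
  refine sq_le_mul_of_hasSum_mul (f := fun k => u ^ (k + 1) / √(k + 1).factorial)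
    (g := fun k => v ^ (k + 1) / √(k + 1).factorial) (fun k => by positivity)
    (fun k => by positivity) ?_ ?_ ?_
  · simpa only [term] using Real.hasSum_pow_succ_div_factorial (u ^ 2)
  · simpa only [term] using Real.hasSum_pow_succ_div_factorial (v ^ 2)
  · convert Real.hasSum_pow_succ_div_factorial (u * v) using 2 with k
    rw [mul_pow, div_mul_div_comm, Real.mul_self_sqrt (by positivity)]

theorem Real.abs_one_sub_exp_le (θ : ℝ) : |1 - Real.exp θ| ≤ Real.exp |θ| - 1 := by
  rcases le_total 0 θ with h | h
  · rw [abs_of_nonneg h, abs_of_nonpos (by linarith [Real.one_le_exp h])]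
    linarith
  · have : 1 - Real.exp θ = Real.exp θ * (Real.exp (-θ) - 1) := by
      rw [mul_sub, ← Real.exp_add]; simp
    rw [abs_of_nonpos h, abs_of_nonneg (by linarith [Real.exp_le_one_iff.2 h]), this]
    exact mul_le_of_le_one_left (by linarith [Real.one_le_exp (neg_nonneg.2 h)])
      (Real.exp_le_one_iff.2 h)

/-- `H_ψ^c(μ, μ_θ)` for the Gaussian shift model; at `θ = 0` it is `0/0 = 0`, not the limit `1`. -/
noncomputable def gaussianRatio (c θ : ℝ) : ℝ :=
  c * (1 - Real.exp θ) ^ 2 / (Real.exp (c * θ ^ 2) - 1)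

theorem gaussianRatio_le {c θ : ℝ} (hc : 0 < c) (hθ : θ ≠ 0) :
    gaussianRatio c θ ≤ c * (Real.exp (1 / c) - 1) := by
  have hden : 0 < Real.exp (c * θ ^ 2) - 1 := sub_pos.2 (Real.one_lt_exp_iff.2 (by positivity))
  have hsc : 0 < √c := Real.sqrt_pos.2 hc
  have key := Real.sq_exp_mul_sub_one_le (inv_nonneg.2 hsc.le) (mul_nonneg hsc.le (abs_nonneg θ))
  rw [inv_pow, mul_pow, Real.sq_sqrt hc.le, sq_abs, inv_mul_cancel_left₀ hsc.ne', ← one_div] at key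
  rw [gaussianRatio, div_le_iff₀ hden, mul_assoc]
  gcongr
  calc (1 - Real.exp θ) ^ 2 = |1 - Real.exp θ| ^ 2 := (sq_abs _).symm
    _ ≤ (Real.exp |θ| - 1) ^ 2 := by gcongr; exact Real.abs_one_sub_exp_le θ
    _ ≤ _ := key

theorem gaussianRatio_one_div {c : ℝ} (hc : 0 < c) :
    gaussianRatio c (1 / c) = c * (Real.exp (1 / c) - 1) := by
  have hpos : 0 < Real.exp (1 / c) - 1 := sub_pos.2 (Real.one_lt_exp_iff.2 (by positivity))
  rw [gaussianRatio, show c * (1 / c) ^ 2 = 1 / c by field_simp]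
  field_simp
  ring

theorem one_lt_mul_exp_one_div_sub_one {c : ℝ} (hc : 0 < c) : 1 < c * (Real.exp (1 / c) - 1) := by
  have h := Real.add_one_lt_exp (one_div_pos.2 hc).ne'
  calc 1 = c * (1 / c) := by field_simp
    _ < c * (Real.exp (1 / c) - 1) := by gcongr; linarith

open Filter

theorem gaussian_efficiency_bound_general (n : ℕ) (hn : 1 ≤ n)
    (H : ℝ → ℝ)
    (hH : ∀ θ : ℝ, θ ≠ 0 →
      H θ = n * (1 - Real.exp θ) ^ 2 / (Real.exp (n * θ ^ 2) - 1))
    (hH0 : H 0 = 1) :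
    (∀ θ : ℝ, H θ ≤ H (1 / n)) ∧
      H (1 / n) = n * (Real.exp (1 / n) - 1) ∧
      1 < n * (Real.exp (1 / n) - 1) := by
  have hn0 : (0 : ℝ) < n := by exact_mod_cast hn
  have hmax : H (1 / n) = n * (Real.exp (1 / n) - 1) :=
    (hH _ (one_div_pos.2 hn0).ne').trans (gaussianRatio_one_div hn0)
  have hgt := one_lt_mul_exp_one_div_sub_one hn0
  refine ⟨fun θ => ?_, hmax, hgt⟩
  rw [hmax]
  rcases eq_or_ne θ 0 with rfl | hθ
  · exact hH0.trans_le hgt.le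
  · exact (hH θ hθ).trans_le (gaussianRatio_le hn0 hθ)

/-- In the Gaussian example, the functional `θ ↦ n(1 - e^θ)²/(e^{nθ²} - 1)` (extended by its
limit `1` at `θ = 0`) attains its supremum at `θ = 1/n`, with value `n(e^{1/n} - 1)`, which is
strictly greater than `1`. -/
theorem gaussian_efficiency_bound (n : ℕ) (hn : 1 ≤ n)
    (H : ℝ → ℝ)
    (hH : ∀ θ : ℝ, θ ≠ 0 →
      H θ = n * (1 - Real.exp θ) ^ 2 / (Real.exp (n * θ ^ 2) - 1))
    (hH0 : H 0 = 1)
    (hlim : Tendsto H (nhdsWithin 0 {(0 : ℝ)}ᶜ) (nhds 1)) :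
    (∀ θ : ℝ, H θ ≤ H (1 / n)) ∧
      H (1 / n) = n * (Real.exp (1 / n) - 1) ∧
      1 < n * (Real.exp (1 / n) - 1) :=
  gaussian_efficiency_bound_general n hn H hH hH0
end

section
/- Fix integers n > n₀ ≥ 1 and ε > 0. The function x ↦ ((x + 1)^{n₀} - 1)/((x + 1)^n - 1) is decreasing on (ε, ∞) whenever n ≥ n₀(ε + 1)^{n₀}/((ε + 1)^{n₀} - 1). -/
/-!
Write `u = x + 1`. The sign of the derivative of `(u ^ n₀ - 1) / (u ^ n - 1)` is that of
`n₀ u ^ n₀ (u ^ n - 1) - n u ^ n (u ^ n₀ - 1)`, which is negative as soon as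
`n₀ u ^ n₀ ≤ n (u ^ n₀ - 1)`. Since `u ^ n₀ / (u ^ n₀ - 1) = 1 + 1 / (u ^ n₀ - 1)` decreases in `u`,
this last inequality holds for all `u > ε + 1` once it holds at `u = ε + 1`, which is the
hypothesis on `n`.
-/

open Set

lemma natCast_mul_pow_sub_one_mul {R : Type*} [CommSemiring R] (m : ℕ) (u : R) :
    m * u ^ (m - 1) * u = m * u ^ m := by
  cases m with
  | zero => simp
  | succ k => rw [Nat.add_sub_cancel, mul_assoc, ← pow_succ]

lemma mul_le_mul_sub_one_of_le {a n s t : ℝ} (hn : 0 ≤ n) (hs : 0 < s) (hst : s ≤ t)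
    (h : a * s ≤ n * (s - 1)) : a * t ≤ n * (t - 1) := by
  have hna : 0 ≤ n - a := by
    by_contra! hna
    nlinarith [mul_neg_of_neg_of_pos hna hs]
  nlinarith [mul_nonneg hna (sub_nonneg.2 hst)]

lemma mul_mul_sub_one_lt {a n t w : ℝ} (hat : 0 < a * t) (hw : 0 < w)
    (h : a * t ≤ n * (t - 1)) : a * t * (w - 1) < n * w * (t - 1) := by
  nlinarith [mul_le_mul_of_nonneg_right h hw.le]

lemma hasDerivAt_pow_sub_one_div_pow_sub_one (m n : ℕ) {u : ℝ} (hu : u ^ n - 1 ≠ 0) :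
    HasDerivAt (fun u : ℝ => (u ^ m - 1) / (u ^ n - 1))
      ((m * u ^ (m - 1) * (u ^ n - 1) - (u ^ m - 1) * (n * u ^ (n - 1))) / (u ^ n - 1) ^ 2) u :=
  ((hasDerivAt_pow m u).sub_const 1).div ((hasDerivAt_pow n u).sub_const 1) hu

lemma strictAntiOn_pow_sub_one_div_pow_sub_one {m n : ℕ} {v : ℝ} (hm : 1 ≤ m) (hv : 1 < v)
    (hmn : m * v ^ m ≤ n * (v ^ m - 1)) :
    StrictAntiOn (fun u : ℝ => (u ^ m - 1) / (u ^ n - 1)) (Ioi v) := by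
  have hvm : 1 < v ^ m := one_lt_pow₀ hv (by omega)
  have hn : 0 < n := by
    have : (0 : ℝ) < n * (v ^ m - 1) := (by positivity : (0 : ℝ) < m * v ^ m).trans_le hmn
    exact_mod_cast pos_of_mul_pos_left this (by linarith)
  have hden {u : ℝ} (hu : u ∈ Ioi v) : 0 < u ^ n - 1 :=
    sub_pos.2 (one_lt_pow₀ (hv.trans hu) hn.ne')
  have hderiv {u : ℝ} (hu : u ∈ Ioi v) := hasDerivAt_pow_sub_one_div_pow_sub_one m n (hden hu).ne'
  refine strictAntiOn_of_deriv_neg (convex_Ioi v)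
    (fun u hu => (hderiv hu).continuousAt.continuousWithinAt) fun u hu => ?_
  rw [interior_Ioi] at hu
  have hu0 : 0 < u := by linarith [mem_Ioi.1 hu]
  rw [(hderiv hu).deriv]
  refine div_neg_of_neg_of_pos ?_ (pow_pos (hden hu) 2)
  refine neg_of_mul_neg_left ?_ hu0.le
  have hmu : m * u ^ m ≤ n * (u ^ m - 1) :=
    mul_le_mul_sub_one_of_le (Nat.cast_nonneg n) (by positivity)
      (pow_le_pow_left₀ (by linarith) (le_of_lt hu) m) hmn
  have hlt := mul_mul_sub_one_lt (by positivity) (pow_pos hu0 n) hmu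
  calc (m * u ^ (m - 1) * (u ^ n - 1) - (u ^ m - 1) * (n * u ^ (n - 1))) * u
      = m * u ^ m * (u ^ n - 1) - n * u ^ n * (u ^ m - 1) := by
        rw [← natCast_mul_pow_sub_one_mul m u, ← natCast_mul_pow_sub_one_mul n u]; ring
    _ < 0 := by linarith

theorem ratio_strictAntiOn_general (n₀ n : ℕ) (hn₀ : 1 ≤ n₀) (ε : ℝ) (hε : 0 < ε)
    (hN : (n₀ : ℝ) * (ε + 1) ^ n₀ / ((ε + 1) ^ n₀ - 1) ≤ (n : ℝ)) :
    StrictAntiOn (fun x : ℝ => ((x + 1) ^ n₀ - 1) / ((x + 1) ^ n - 1)) (Set.Ioi ε) := by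
  have hv : 1 < ε + 1 := by linarith
  have hvn₀ : 0 < (ε + 1) ^ n₀ - 1 := sub_pos.2 (one_lt_pow₀ hv (by omega))
  have hmn : n₀ * (ε + 1) ^ n₀ ≤ n * ((ε + 1) ^ n₀ - 1) := (div_le_iff₀ hvn₀).1 hN
  exact (strictAntiOn_pow_sub_one_div_pow_sub_one hn₀ hv hmn).comp_strictMonoOn
    ((strictMono_id.add_const 1).strictMonoOn _) fun x hx => by simpa using hx

/-- For integers `n > n₀ ≥ 1` and `ε > 0`, the function
`x ↦ ((x+1)^{n₀} - 1)/((x+1)^n - 1)` is (strictly) decreasing on `(ε, ∞)` whenever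
`n ≥ n₀(ε+1)^{n₀}/((ε+1)^{n₀} - 1)`. -/
theorem ratio_strictAntiOn (n₀ n : ℕ) (hn₀ : 1 ≤ n₀) (hn : n₀ < n) (ε : ℝ) (hε : 0 < ε)
    (hN : (n₀ : ℝ) * (ε + 1) ^ n₀ / ((ε + 1) ^ n₀ - 1) ≤ (n : ℝ)) :
    StrictAntiOn (fun x : ℝ => ((x + 1) ^ n₀ - 1) / ((x + 1) ^ n - 1)) (Set.Ioi ε) :=
  ratio_strictAntiOn_general n₀ n hn₀ ε hε hN
end

section
/- Suppose there exist n₀ ∈ N and B < ∞ such that for all measures ν in the model, n₀ (ψ(μ) - ψ(ν))² / ((d(μ,ν)+1)^{n₀} - 1) ≤ B. Then for every ε > 0, sup over {ν : d(μ,ν) > ε} of n(ψ(μ)-ψ(ν))²/((d(μ,ν)+1)^n - 1) tends to 0 as n → ∞. In fact, for n large enough, this supremum is at most (nB/n₀)·((ε+1)^{n₀} - 1)/((ε+1)^n - 1). -/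
open MeasureTheory Filter

open Classical in
/-- The quadratic divergence `d(μ,ν)`: `∫ (1 - dν/dμ)² dμ` if `ν ≪ μ` with square-integrable
density, `+∞` otherwise. -/
noncomputable def qdiv {X : Type*} [MeasurableSpace X] (μ ν : Measure X) : ENNReal :=
  if ν ≪ μ ∧ MemLp (fun x => (ν.rnDeriv μ x).toReal) 2 μ then
    ENNReal.ofReal (∫ x, (1 - (ν.rnDeriv μ x).toReal) ^ 2 ∂μ)
  else ⊤

/-- The finite-sample efficiency functional
`H_ψ^n(μ,ν) = n(ψ(μ) - ψ(ν))²/((d(μ,ν)+1)^n - 1)` (equal to `0` if `d(μ,ν) = ∞`,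
by the Lean convention `x / 0 = 0` and `(⊤ : ℝ≥0∞).toReal = 0`). -/
noncomputable def Hfun {X : Type*} [MeasurableSpace X] (ψ : Measure X → ℝ)
    (μ ν : Measure X) (n : ℕ) : ℝ :=
  n * (ψ μ - ψ ν) ^ 2 / (((qdiv μ ν + 1) ^ n - 1).toReal)

/-!
For `d = d(μ,ν) > ε`, the bound `H^{n₀}(μ,ν) ≤ B` gives `(ψ(μ) - ψ(ν))² ≤ B((d+1)^{n₀} - 1)/n₀`,
hence `H^n(μ,ν) ≤ (nB/n₀) ((d+1)^{n₀} - 1)/((d+1)^n - 1)`. For `n ≥ n₀` the ratio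
`(x^{n₀} - 1)/(x^n - 1)` decreases in `x ≥ 1`, as the quotient of geometric sums
`∑_{i<n} x^i / ∑_{j<n₀} x^j` increases, so `d` may be replaced by `ε`. The resulting bound
is `O(n (ε+1)^{-n})`, uniformly in `ν`.
-/

open Finset in
theorem geom_sum_mul_geom_sum_le {R : Type*} [CommRing R] [LinearOrder R]
    [IsStrictOrderedRing R] {a b : R} (ha : 0 ≤ a) (hab : a ≤ b) {n₀ n : ℕ} (hn : n₀ ≤ n) :
    (∑ j ∈ range n₀, b ^ j) * (∑ i ∈ range n, a ^ i) ≤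
      (∑ j ∈ range n₀, a ^ j) * (∑ i ∈ range n, b ^ i) := by
  rw [← sum_range_add_sum_Ico (a ^ ·) hn, ← sum_range_add_sum_Ico (b ^ ·) hn, mul_add, mul_add,
    mul_comm (∑ j ∈ range n₀, b ^ j)]
  gcongr _ + ?_
  rw [sum_mul_sum, sum_mul_sum]
  refine sum_le_sum fun j hj => sum_le_sum fun i hi => ?_
  obtain ⟨k, rfl⟩ := Nat.exists_eq_add_of_le ((mem_range.1 hj).le.trans (mem_Ico.1 hi).1)
  have hb : 0 ≤ b := ha.trans hab
  calc b ^ j * a ^ (j + k) = a ^ j * b ^ j * a ^ k := by ring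
    _ ≤ a ^ j * b ^ j * b ^ k := by gcongr
    _ = a ^ j * b ^ (j + k) := by ring

theorem pow_sub_one_mul_pow_sub_one_le {R : Type*} [CommRing R] [LinearOrder R]
    [IsStrictOrderedRing R] {a b : R} (ha : 1 ≤ a) (hab : a ≤ b) {n₀ n : ℕ} (hn : n₀ ≤ n) :
    (b ^ n₀ - 1) * (a ^ n - 1) ≤ (a ^ n₀ - 1) * (b ^ n - 1) := by
  rw [← geom_sum_mul, ← geom_sum_mul, ← geom_sum_mul, ← geom_sum_mul]
  have hab1 : 0 ≤ (a - 1) * (b - 1) :=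
    mul_nonneg (sub_nonneg.2 ha) (sub_nonneg.2 (ha.trans hab))
  linear_combination
    mul_le_mul_of_nonneg_right (geom_sum_mul_geom_sum_le (zero_le_one.trans ha) hab hn) hab1

theorem mul_div_pow_sub_one_le {q B x y : ℝ} {n₀ n : ℕ} (hn₀ : 1 ≤ n₀) (hn : n₀ ≤ n)
    (hy : 1 < y) (hyx : y ≤ x) (hq : 0 ≤ q) (hB : n₀ * q / (x ^ n₀ - 1) ≤ B) :
    n * q / (x ^ n - 1) ≤ n * B / n₀ * ((y ^ n₀ - 1) / (y ^ n - 1)) := by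
  have hpos : ∀ {z : ℝ} {m : ℕ}, 1 < z → 1 ≤ m → 0 < z ^ m - 1 := fun hz hm =>
    sub_pos.2 (one_lt_pow₀ hz (by omega))
  have hx : 1 < x := hy.trans_le hyx
  have hxn : 0 < x ^ n - 1 := hpos hx (hn₀.trans hn)
  have hyn : 0 < y ^ n - 1 := hpos hy (hn₀.trans hn)
  have hn₀' : (0 : ℝ) < n₀ := by exact_mod_cast hn₀
  have hqB : q ≤ B * (x ^ n₀ - 1) / n₀ := by
    rw [div_le_iff₀ (hpos hx hn₀)] at hB
    rw [le_div_iff₀ hn₀']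
    linarith
  have hB0 : 0 ≤ B := (div_nonneg (by positivity) (hpos hx hn₀).le).trans hB
  calc n * q / (x ^ n - 1) ≤ n * (B * (x ^ n₀ - 1) / n₀) / (x ^ n - 1) := by gcongr
    _ = n * B / n₀ * ((x ^ n₀ - 1) / (x ^ n - 1)) := by ring
    _ ≤ n * B / n₀ * ((y ^ n₀ - 1) / (y ^ n - 1)) := by
        gcongr ?_ * ?_
        rw [div_le_div_iff₀ hxn hyn]
        exact pow_sub_one_mul_pow_sub_one_le hy.le hyx hn

theorem tendsto_natCast_div_pow_sub_one {y : ℝ} (hy : 1 < y) :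
    Tendsto (fun n : ℕ => n / (y ^ n - 1)) atTop (nhds 0) := by
  have hnum : Tendsto (fun n : ℕ => (n : ℝ) / y ^ n) atTop (nhds 0) := by
    simpa using tendsto_pow_const_div_const_pow_of_one_lt 1 hy
  have hden : Tendsto (fun n : ℕ => 1 - y⁻¹ ^ n) atTop (nhds (1 - 0)) :=
    (tendsto_pow_atTop_nhds_zero_of_lt_one (by positivity) (inv_lt_one_of_one_lt₀ hy)).const_sub 1
  have hquot : Tendsto (fun n : ℕ => (n : ℝ) / y ^ n / (1 - y⁻¹ ^ n)) atTop (nhds 0) := by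
    simpa only [sub_zero, zero_div, Pi.div_def] using hnum.div hden (by norm_num)
  refine hquot.congr fun n => ?_
  rw [inv_pow, div_div, mul_one_sub, mul_inv_cancel₀ (pow_ne_zero n (by positivity))]

section Hfun

variable {X : Type*} [MeasurableSpace X] {ψ : Measure X → ℝ} {μ ν : Measure X}

theorem Hfun_nonneg (n : ℕ) : 0 ≤ Hfun ψ μ ν n := by
  unfold Hfun
  positivity

theorem Hfun_of_qdiv_eq_top (hd : qdiv μ ν = ⊤) {n : ℕ} (hn : n ≠ 0) : Hfun ψ μ ν n = 0 := by
  simp [Hfun, hd, ENNReal.top_pow hn]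

theorem Hfun_of_qdiv_ne_top (hd : qdiv μ ν ≠ ⊤) (n : ℕ) :
    Hfun ψ μ ν n = n * (ψ μ - ψ ν) ^ 2 / (((qdiv μ ν).toReal + 1) ^ n - 1) := by
  have hle : 1 ≤ (qdiv μ ν + 1) ^ n := one_le_pow_of_one_le' le_add_self n
  rw [Hfun, ENNReal.toReal_sub_of_le hle (by finiteness), ENNReal.toReal_pow,
    ENNReal.toReal_add hd ENNReal.one_ne_top, ENNReal.toReal_one]

theorem Hfun_le_of_ofReal_lt_qdiv {n₀ n : ℕ} {B ε : ℝ} (hn₀ : 1 ≤ n₀) (hn : n₀ ≤ n)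
    (hB : Hfun ψ μ ν n₀ ≤ B) (hε : 0 < ε) (hd : ENNReal.ofReal ε < qdiv μ ν) :
    Hfun ψ μ ν n ≤ n * B / n₀ * (((ε + 1) ^ n₀ - 1) / ((ε + 1) ^ n - 1)) := by
  by_cases htop : qdiv μ ν = ⊤
  · rw [Hfun_of_qdiv_eq_top htop (by omega)]
    have hB0 : 0 ≤ B := (Hfun_nonneg n₀).trans hB
    have hpow : ∀ m : ℕ, 0 ≤ (ε + 1) ^ m - 1 := fun m =>
      sub_nonneg.2 (one_le_pow₀ (by linarith))
    exact mul_nonneg (by positivity) (div_nonneg (hpow n₀) (hpow n))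
  · rw [Hfun_of_qdiv_ne_top htop] at hB ⊢
    have hεd : ε < (qdiv μ ν).toReal := (ENNReal.ofReal_lt_iff_lt_toReal hε.le htop).1 hd
    exact mul_div_pow_sub_one_le hn₀ hn (by linarith) (by linarith) (sq_nonneg _) hB

end Hfun

/-- Uniform convergence of `H_ψ^n` to `0` away from `μ` (Lemma 3): if
`H_ψ^{n₀}(μ,ν) ≤ B` for all `ν` in the model `P`, then for every `ε > 0` the supremum of
`H_ψ^n(μ,ν)` over `{ν ∈ P : d(μ,ν) > ε}` tends to `0`; indeed for `n` large it is bounded by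
`(n B / n₀) ((ε+1)^{n₀} - 1)/((ε+1)^n - 1)`. -/
theorem H_uniform_convergence {X : Type*} [MeasurableSpace X]
    (P : Set (Measure X)) (ψ : Measure X → ℝ) (μ : Measure X)
    (n₀ : ℕ) (hn₀ : 1 ≤ n₀) (B : ℝ)
    (hB : ∀ ν ∈ P, Hfun ψ μ ν n₀ ≤ B) (ε : ℝ) (hε : 0 < ε) :
    (∃ N : ℕ, ∀ n ≥ N, ∀ ν ∈ P, ENNReal.ofReal ε < qdiv μ ν →
        Hfun ψ μ ν n ≤ (n * B / n₀) * (((ε + 1) ^ n₀ - 1) / ((ε + 1) ^ n - 1))) ∧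
      (∀ δ : ℝ, 0 < δ → ∃ N : ℕ, ∀ n ≥ N, ∀ ν ∈ P, ENNReal.ofReal ε < qdiv μ ν →
        Hfun ψ μ ν n ≤ δ) := by
  have hbound : ∀ n ≥ n₀, ∀ ν ∈ P, ENNReal.ofReal ε < qdiv μ ν →
      Hfun ψ μ ν n ≤ (n * B / n₀) * (((ε + 1) ^ n₀ - 1) / ((ε + 1) ^ n - 1)) :=
    fun n hn ν hν hd => Hfun_le_of_ofReal_lt_qdiv hn₀ hn (hB ν hν) hε hd
  have htend : Tendsto
      (fun n : ℕ => (n * B / n₀) * (((ε + 1) ^ n₀ - 1) / ((ε + 1) ^ n - 1))) atTop (nhds 0) := by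
    have h := (tendsto_natCast_div_pow_sub_one (by linarith : 1 < ε + 1)).const_mul
      (B / n₀ * ((ε + 1) ^ n₀ - 1))
    rw [mul_zero] at h
    refine h.congr fun n => ?_
    ring
  refine ⟨⟨n₀, hbound⟩, fun δ hδ => ?_⟩
  obtain ⟨N, hN⟩ :=
    ((htend.eventually (gt_mem_nhds hδ)).and (eventually_ge_atTop n₀)).exists_forall_of_atTop
  exact ⟨N, fun n hn ν hν hd => (hbound n (hN n hn).2 ν hν hd).trans (hN n hn).1.le⟩
end

section
/- Let (μ_θ) be a path of measures with μ = μ_{θ₀}. If d(μ,μ_θ)/(θ-θ₀)² → I > 0 as θ → θ₀ and (ψ(μ)-ψ(μ_θ))/(θ-θ₀) → ψ'(θ₀), then for each fixed n, H_ψ^n(μ,μ_θ) = n(ψ(μ)-ψ(μ_θ))²/((d(μ,μ_θ)+1)^n - 1) converges to ψ'(θ₀)²/I as θ → θ₀. -/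
open Filter

/-- Proposition 2: along a path `θ ↦ μ_θ` with quadratic divergence `d θ = d(μ, μ_θ) ≥ 0`
satisfying `d θ/(θ-θ₀)² → I > 0` and parameter difference `p θ = ψ(μ) - ψ(μ_θ)` satisfying
`p θ/(θ-θ₀) → ψ'(θ₀)`, the functional `H_ψ^n(μ,μ_θ) = n (p θ)²/((d θ + 1)^n - 1)` converges,
for every fixed `n ≥ 1`, to the Cramér–Rao bound `ψ'(θ₀)²/I` as `θ → θ₀`. -/
theorem H_tendsto_cramer_rao (θ₀ : ℝ) (d p : ℝ → ℝ) (hd0 : ∀ θ, 0 ≤ d θ)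
    (I : ℝ) (hI : 0 < I)
    (hdI : Tendsto (fun θ => d θ / (θ - θ₀) ^ 2) (nhdsWithin θ₀ {θ₀}ᶜ) (nhds I))
    (ψ' : ℝ)
    (hp : Tendsto (fun θ => p θ / (θ - θ₀)) (nhdsWithin θ₀ {θ₀}ᶜ) (nhds ψ'))
    (n : ℕ) (hn : 1 ≤ n) :
    Tendsto (fun θ => n * (p θ) ^ 2 / ((d θ + 1) ^ n - 1))
      (nhdsWithin θ₀ {θ₀}ᶜ) (nhds (ψ' ^ 2 / I)) := by
  set l := nhdsWithin θ₀ {θ₀}ᶜ with hl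
  have hs : ∀ᶠ θ in l, (θ - θ₀) ^ 2 ≠ 0 := by
    filter_upwards [self_mem_nhdsWithin] with θ hθ
    have h : θ - θ₀ ≠ 0 := sub_ne_zero.mpr hθ
    positivity
  have hs2 : ∀ᶠ θ in l, 0 < (θ - θ₀) ^ 2 := by
    filter_upwards [hs] with θ h using (pow_two_nonneg _).lt_of_ne' h
  have hd_pos : ∀ᶠ θ in l, 0 < d θ := by
    have h1 : ∀ᶠ θ in l, 0 < d θ / (θ - θ₀) ^ 2 :=
      hdI.eventually (eventually_gt_nhds hI)
    filter_upwards [h1, hs2] with θ h hs'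
    exact (div_pos_iff.mp h).resolve_right (fun h2 => absurd hs' (not_lt.mpr h2.2.le)) |>.1
  have hs0 : Tendsto (fun θ => (θ - θ₀) ^ 2) l (nhds 0) := by
    have : Tendsto (fun θ => (θ - θ₀) ^ 2) (nhds θ₀) (nhds ((θ₀ - θ₀) ^ 2)) :=
      (continuous_id.sub continuous_const |>.pow 2).tendsto θ₀
    simpa using this.mono_left nhdsWithin_le_nhds
  have hd_lim : Tendsto d l (nhds 0) := by
    have h := hdI.mul hs0
    rw [mul_zero] at h
    refine h.congr' ?_
    filter_upwards [hs] with θ h using div_mul_cancel₀ _ h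
  have hdne : Tendsto d l (nhdsWithin 0 {0}ᶜ) := by
    rw [tendsto_nhdsWithin_iff]
    exact ⟨hd_lim, by filter_upwards [hd_pos] with θ h using ne_of_gt h⟩
  have hslope : Tendsto (fun u : ℝ => ((u + 1) ^ n - 1) / u) (nhdsWithin 0 {0}ᶜ)
      (nhds n) := by
    have hder : HasDerivAt (fun u : ℝ => (u + 1) ^ n) (n : ℝ) 0 := by
      have := ((hasDerivAt_id (0 : ℝ)).add_const 1).pow n
      simpa [Pi.pow_def] using this
    have := hasDerivAt_iff_tendsto_slope.mp hder
    refine this.congr ?_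
    intro u
    simp [slope_def_field]
  have hq : Tendsto (fun θ => ((d θ + 1) ^ n - 1) / (θ - θ₀) ^ 2) l (nhds (n * I)) := by
    have h := (hslope.comp hdne).mul hdI
    refine h.congr' ?_
    filter_upwards [hd_pos, hs] with θ h1 h2
    simp only [Function.comp]
    rw [div_mul_div_comm, div_eq_div_iff (by positivity) (by positivity)]
    ring
  have hnum : Tendsto (fun θ => (n : ℝ) * (p θ / (θ - θ₀)) ^ 2) l (nhds ((n : ℝ) * ψ' ^ 2)) :=
    tendsto_const_nhds.mul (hp.pow 2)
  have hn' : (0 : ℝ) < n := by positivity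
  have hfin := hnum.div hq (by positivity)
  have hval : (n : ℝ) * ψ' ^ 2 / ((n : ℝ) * I) = ψ' ^ 2 / I := by
    rw [mul_div_mul_left _ _ (ne_of_gt hn')]
  rw [hval] at hfin
  refine hfin.congr' ?_
  filter_upwards [hd_pos, hs] with θ h1 h2
  have hD : (0 : ℝ) < (d θ + 1) ^ n - 1 := by
    have : (1 : ℝ) < (d θ + 1) ^ n := one_lt_pow₀ (by linarith) (by omega)
    linarith
  simp only [Pi.div_apply]
  rw [div_pow, div_eq_div_iff (by positivity) (by positivity)]
  field_simp
end

section
/- Let μ be a probability measure and Φ ∈ L²(μ; R^k) with ∫Φ dμ = 0 and var(Φ) invertible, and h ∈ L²(μ) with ∫h dμ = θ₀. Define h^⊥ = h - (∫hΦᵗdμ)[∫ΦΦᵗdμ]^{-1}Φ and V = Var_μ(h^⊥). Then among f ∈ L²(μ) with ∫f dμ = 1, ∫Φ f dμ = 0, and ∫ h f dμ = θ, the minimum of ∫(1-f)² dμ equals (θ₀-θ)² V^{-1}, attained at f_θ = 1 - (θ₀-θ)V^{-1}(h^⊥ - θ₀). -/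
/-!
Write `q = h^⊥ - θ₀ = h - c ⬝ Φ - θ₀` with `c = (∫ hΦᵗ) M⁻¹`. The normal equations `c M = ∫ hΦᵗ`
make `q` orthogonal to every `Φᵢ`, and the centring assumptions make it orthogonal to `1`;
hence `∫ h q = ∫ q² = V`. For every feasible `f` this gives `∫ q (1 - f) = θ₀ - θ`, so
Cauchy–Schwarz yields `(θ₀ - θ)² ≤ V ∫ (1 - f)²`, with equality for `1 - f` proportional to `q`,
which is `f_θ`.
-/

open MeasureTheory Matrix

section L2

variable {X : Type*} [MeasurableSpace X] {μ : Measure X}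

theorem sq_integral_mul_le_mul {f g : X → ℝ} (hf : MemLp f 2 μ) (hg : MemLp g 2 μ) :
    (∫ x, f x * g x ∂μ) ^ 2 ≤ (∫ x, f x ^ 2 ∂μ) * ∫ x, g x ^ 2 ∂μ := by
  have integral_mul_eq_inner : ∀ {u v : X → ℝ} (hu : MemLp u 2 μ) (hv : MemLp v 2 μ),
      ∫ x, u x * v x ∂μ = inner ℝ (hu.toLp u) (hv.toLp v) := by
    intro u v hu hv
    rw [L2.inner_def]
    refine integral_congr_ae ?_
    filter_upwards [hu.coeFn_toLp, hv.coeFn_toLp] with x hux hvx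
    simp [hux, hvx, mul_comm]
  simp only [sq, integral_mul_eq_inner hf hg, integral_mul_eq_inner hf hf,
    integral_mul_eq_inner hg hg]
  exact real_inner_mul_inner_self_le _ _

variable {ι : Type*} [Fintype ι] {Φ : X → ι → ℝ}

theorem memLp_dotProduct (hΦ : ∀ i, MemLp (fun x => Φ x i) 2 μ) (c : ι → ℝ) :
    MemLp (fun x => c ⬝ᵥ Φ x) 2 μ := by
  simp only [dotProduct]
  exact memLp_finsetSum _ fun i _ => (hΦ i).const_mul (c i)

theorem integral_dotProduct_mul (hΦ : ∀ i, MemLp (fun x => Φ x i) 2 μ) {g : X → ℝ}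
    (hg : MemLp g 2 μ) (c : ι → ℝ) :
    ∫ x, c ⬝ᵥ Φ x * g x ∂μ = c ⬝ᵥ fun i => ∫ x, Φ x i * g x ∂μ := by
  simp only [dotProduct, Finset.sum_mul, mul_assoc]
  rw [integral_finsetSum _ fun i _ => ?_]
  · simp only [integral_const_mul]
  · exact ((hΦ i).integrable_mul hg).const_mul (c i)

theorem integral_residual_mul [IsFiniteMeasure μ] (hΦ : ∀ i, MemLp (fun x => Φ x i) 2 μ)
    {h g : X → ℝ} (hh : MemLp h 2 μ) (hg : MemLp g 2 μ) (c : ι → ℝ) (θ₀ : ℝ) :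
    ∫ x, (h x - c ⬝ᵥ Φ x - θ₀) * g x ∂μ
      = ∫ x, h x * g x ∂μ - (c ⬝ᵥ fun i => ∫ x, Φ x i * g x ∂μ) - θ₀ * ∫ x, g x ∂μ := by
  simp only [sub_mul]
  have hhg : Integrable (fun x => h x * g x) μ := hh.integrable_mul hg
  have hΦg : Integrable (fun x => c ⬝ᵥ Φ x * g x) μ := (memLp_dotProduct hΦ c).integrable_mul hg
  rw [integral_sub ?_ ?_, integral_sub hhg hΦg, integral_dotProduct_mul hΦ hg,
    integral_const_mul]
  · exact hhg.sub hΦg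
  · exact (hg.integrable one_le_two).const_mul θ₀

theorem integral_residual_mul_eq_zero [IsFiniteMeasure μ] (hΦ : ∀ i, MemLp (fun x => Φ x i) 2 μ)
    (hΦ0 : ∀ i, ∫ x, Φ x i ∂μ = 0) {h : X → ℝ} (hh : MemLp h 2 μ) {c : ι → ℝ}
    (hc : c ᵥ* Matrix.of (fun i j => ∫ x, Φ x i * Φ x j ∂μ) = fun i => ∫ x, h x * Φ x i ∂μ)
    (θ₀ : ℝ) (i : ι) :
    ∫ x, (h x - c ⬝ᵥ Φ x - θ₀) * Φ x i ∂μ = 0 := by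
  rw [integral_residual_mul hΦ hh (hΦ i), hΦ0 i, ← congrFun hc i]
  simp [Matrix.vecMul]

end L2

section Residual

variable {X : Type*} [MeasurableSpace X] {μ : Measure X} [IsProbabilityMeasure μ]
  {ι : Type*} [Fintype ι] {Φ : X → ι → ℝ} {h : X → ℝ} {θ₀ : ℝ}

theorem integral_residual (hΦ : ∀ i, MemLp (fun x => Φ x i) 2 μ) (hΦ0 : ∀ i, ∫ x, Φ x i ∂μ = 0)
    (hh : MemLp h 2 μ) (hθ₀ : ∫ x, h x ∂μ = θ₀) (c : ι → ℝ) :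
    ∫ x, (h x - c ⬝ᵥ Φ x - θ₀) ∂μ = 0 := by
  simpa [hΦ0, hθ₀] using integral_residual_mul hΦ hh (memLp_const 1) c θ₀

theorem integral_mul_residual_eq_integral_sq (hΦ : ∀ i, MemLp (fun x => Φ x i) 2 μ)
    (hΦ0 : ∀ i, ∫ x, Φ x i ∂μ = 0) (hh : MemLp h 2 μ) (hθ₀ : ∫ x, h x ∂μ = θ₀) {c : ι → ℝ}
    (horth : ∀ i, ∫ x, (h x - c ⬝ᵥ Φ x - θ₀) * Φ x i ∂μ = 0) :
    ∫ x, h x * (h x - c ⬝ᵥ Φ x - θ₀) ∂μ = ∫ x, (h x - c ⬝ᵥ Φ x - θ₀) ^ 2 ∂μ := by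
  have hq : MemLp (fun x => h x - c ⬝ᵥ Φ x - θ₀) 2 μ :=
    (hh.sub (memLp_dotProduct hΦ c)).sub (memLp_const θ₀)
  have := integral_residual_mul hΦ hh hq c θ₀
  simp only [mul_comm (Φ _ _), horth, integral_residual hΦ hΦ0 hh hθ₀] at this
  simpa [sq] using this.symm

theorem moment_conditions_one_sub_mul_residual (hΦ : ∀ i, MemLp (fun x => Φ x i) 2 μ)
    (hΦ0 : ∀ i, ∫ x, Φ x i ∂μ = 0) (hh : MemLp h 2 μ) (hθ₀ : ∫ x, h x ∂μ = θ₀) {c : ι → ℝ}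
    (horth : ∀ i, ∫ x, (h x - c ⬝ᵥ Φ x - θ₀) * Φ x i ∂μ = 0)
    {V : ℝ} (hV : V = ∫ x, (h x - c ⬝ᵥ Φ x - θ₀) ^ 2 ∂μ) (hVpos : 0 < V) {θ : ℝ} {fθ : X → ℝ}
    (hfθ : fθ = fun x => 1 - (θ₀ - θ) * V⁻¹ * (h x - c ⬝ᵥ Φ x - θ₀)) :
    (∫ x, fθ x ∂μ = 1) ∧ (∀ i, ∫ x, Φ x i * fθ x ∂μ = 0) ∧
      (∫ x, h x * fθ x ∂μ = θ) ∧ (∫ x, (1 - fθ x) ^ 2 ∂μ = (θ₀ - θ) ^ 2 * V⁻¹) := by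
  set q : X → ℝ := fun x => h x - c ⬝ᵥ Φ x - θ₀
  set s : ℝ := (θ₀ - θ) * V⁻¹
  subst hfθ
  have hq : MemLp q 2 μ := (hh.sub (memLp_dotProduct hΦ c)).sub (memLp_const θ₀)
  have integral_mul_one_sub : ∀ g : X → ℝ, MemLp g 2 μ →
      ∫ x, g x * (1 - s * q x) ∂μ = ∫ x, g x ∂μ - s * ∫ x, g x * q x ∂μ := by
    intro g hg
    simp only [mul_sub, mul_one, mul_left_comm (g _) s]
    rw [integral_sub ?_ ?_, integral_const_mul]
    · exact hg.integrable one_le_two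
    · exact (hg.integrable_mul hq).const_mul s
  refine ⟨?_, fun i => ?_, ?_, ?_⟩
  · have hq0 : ∫ x, q x ∂μ = 0 := integral_residual hΦ hΦ0 hh hθ₀ c
    simpa [hq0] using integral_mul_one_sub 1 (memLp_const 1)
  · have hqΦ : ∫ x, Φ x i * q x ∂μ = 0 := by simpa only [mul_comm] using horth i
    rw [integral_mul_one_sub _ (hΦ i), hΦ0 i, hqΦ, mul_zero, sub_zero]
  · rw [integral_mul_one_sub h hh, integral_mul_residual_eq_integral_sq hΦ hΦ0 hh hθ₀ horth,
      ← hV, hθ₀]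
    simp only [s]
    field_simp
    ring
  · simp only [sub_sub_cancel, mul_pow]
    rw [integral_const_mul, ← hV]
    simp only [s]
    field_simp

theorem sq_mul_inv_le_integral_one_sub_sq (hΦ : ∀ i, MemLp (fun x => Φ x i) 2 μ)
    (hΦ0 : ∀ i, ∫ x, Φ x i ∂μ = 0) (hh : MemLp h 2 μ) (hθ₀ : ∫ x, h x ∂μ = θ₀) (c : ι → ℝ)
    {V : ℝ} (hV : V = ∫ x, (h x - c ⬝ᵥ Φ x - θ₀) ^ 2 ∂μ) (hVpos : 0 < V) {θ : ℝ}
    {f : X → ℝ} (hf : MemLp f 2 μ) (hf1 : ∫ x, f x ∂μ = 1)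
    (hfΦ : ∀ i, ∫ x, Φ x i * f x ∂μ = 0) (hfh : ∫ x, h x * f x ∂μ = θ) :
    (θ₀ - θ) ^ 2 * V⁻¹ ≤ ∫ x, (1 - f x) ^ 2 ∂μ := by
  set q : X → ℝ := fun x => h x - c ⬝ᵥ Φ x - θ₀
  have hq : MemLp q 2 μ := (hh.sub (memLp_dotProduct hΦ c)).sub (memLp_const θ₀)
  have hqf : ∫ x, q x * (1 - f x) ∂μ = θ₀ - θ := by
    have hqf' := integral_residual_mul hΦ hh hf c θ₀
    simp only [hfΦ, hfh, hf1] at hqf'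
    simp only [mul_sub, mul_one]
    rw [integral_sub ?_ ?_, integral_residual hΦ hΦ0 hh hθ₀ c, hqf']
    · simp
    · exact hq.integrable one_le_two
    · exact hq.integrable_mul hf
  have h1f : MemLp (fun x => 1 - f x) 2 μ := (memLp_const 1).sub hf
  have cauchy_schwarz := sq_integral_mul_le_mul hq h1f
  rw [hqf, ← hV] at cauchy_schwarz
  rwa [← div_eq_mul_inv, div_le_iff₀' hVpos]

end Residual

/-- Q-projection in the moment-condition model (Example 3): with `Φ ∈ L²(μ; ℝ^k)`,
`∫ Φ dμ = 0`, `∫ΦΦᵗ dμ` invertible, `h ∈ L²(μ)` with `∫ h dμ = θ₀`,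
`h^⊥ = h - (∫ hΦᵗ dμ)[∫ΦΦᵗ dμ]⁻¹ Φ` and `V = Var_μ(h^⊥) > 0`, the minimum of
`∫ (1-f)² dμ` over `f ∈ L²(μ)` with `∫ f dμ = 1`, `∫ Φ f dμ = 0`, `∫ h f dμ = θ`
equals `(θ₀-θ)² V⁻¹`, attained at `f_θ = 1 - (θ₀-θ)V⁻¹(h^⊥ - θ₀)`. -/
theorem qprojection_moment_condition {X : Type*} [MeasurableSpace X]
    (μ : Measure X) [IsProbabilityMeasure μ] (k : ℕ)
    (Φ : X → Fin k → ℝ) (hΦ : ∀ i, MemLp (fun x => Φ x i) 2 μ)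
    (hΦ0 : ∀ i, ∫ x, Φ x i ∂μ = 0)
    (M : Matrix (Fin k) (Fin k) ℝ) (hM : M = Matrix.of fun i j => ∫ x, Φ x i * Φ x j ∂μ)
    (hMinv : IsUnit M.det)
    (h : X → ℝ) (hh : MemLp h 2 μ) (θ₀ : ℝ) (hθ₀ : ∫ x, h x ∂μ = θ₀)
    (hp : X → ℝ)
    (hhp : hp = fun x => h x - ∑ i, ∑ j, (∫ y, h y * Φ y i ∂μ) * M⁻¹ i j * Φ x j)
    (V : ℝ) (hV : V = ∫ x, (hp x - θ₀) ^ 2 ∂μ) (hVpos : 0 < V) (θ : ℝ)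
    (fθ : X → ℝ) (hfθ : fθ = fun x => 1 - (θ₀ - θ) * V⁻¹ * (hp x - θ₀)) :
    (∫ x, fθ x ∂μ = 1) ∧ (∀ i, ∫ x, Φ x i * fθ x ∂μ = 0) ∧
      (∫ x, h x * fθ x ∂μ = θ) ∧
      (∫ x, (1 - fθ x) ^ 2 ∂μ = (θ₀ - θ) ^ 2 * V⁻¹) ∧
      (∀ f : X → ℝ, MemLp f 2 μ → (∫ x, f x ∂μ = 1) → (∀ i, ∫ x, Φ x i * f x ∂μ = 0) →
        (∫ x, h x * f x ∂μ = θ) →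
        (θ₀ - θ) ^ 2 * V⁻¹ ≤ ∫ x, (1 - f x) ^ 2 ∂μ) := by
  set c := (fun i => ∫ y, h y * Φ y i ∂μ) ᵥ* M⁻¹
  have normal_eq : c ᵥ* M = fun i => ∫ y, h y * Φ y i ∂μ := by
    rw [vecMul_vecMul, nonsing_inv_mul M hMinv, vecMul_one]
  have hp_eq : hp = fun x => h x - c ⬝ᵥ Φ x := by
    rw [hhp]
    ext x
    simp only [c, dotProduct, vecMul, Finset.sum_mul]
    rw [Finset.sum_comm]
  have horth := integral_residual_mul_eq_zero hΦ hΦ0 hh (hM ▸ normal_eq) θ₀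
  simp only [hp_eq] at hV hfθ
  obtain ⟨h_mass, h_Φ, h_h, h_dist⟩ :=
    moment_conditions_one_sub_mul_residual hΦ hΦ0 hh hθ₀ horth hV hVpos hfθ
  exact ⟨h_mass, h_Φ, h_h, h_dist, fun f hf hf1 hfΦ hfh =>
    sq_mul_inv_le_integral_one_sub_sq hΦ hΦ0 hh hθ₀ c hV hVpos hf hf1 hfΦ hfh⟩
end
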